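/- arXiv:1211.7138 — 5 statements merged into one kernel-verified Lean document; each statement's English description precedes it below -/
import Mathlib

section
/- Let A ⊆ ℝⁿ be a cone, i.e., A is measurable and tA = A for all t > 0. Then ∫_{ℝⁿ} (Σ_{i=1}^n (1 - y_i²)) 1_A(y) dγ_n(y) = 0. -/
open MeasureTheory Pointwise

/-- The standard Gaussian probability measure `γₙ` on `ℝⁿ`. -/
noncomputable def gauss (n : ℕ) : Measure (EuclideanSpace ℝ (Fin n)) :=
  volume.withDensity
    (fun y => ENNReal.ofReal ((2 * Real.pi) ^ (-(n : ℝ) / 2) * Real.exp (-‖y‖ ^ 2 / 2)))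

/-- The Ornstein-Uhlenbeck (noise) operator `T_ρ`. -/
noncomputable def OU (n : ℕ) (ρ : ℝ) (f : EuclideanSpace ℝ (Fin n) → ℝ)
    (x : EuclideanSpace ℝ (Fin n)) : ℝ :=
  ∫ y, f (ρ • x + Real.sqrt (1 - ρ ^ 2) • y) ∂(gauss n)

/-!
For a cone `A` and `t > 0`, the substitution `y ↦ t • y` gives
`∫_A exp (-t² ‖y‖² / 2) dy = t⁻ⁿ ∫_A exp (-‖y‖² / 2) dy`. Differentiating both sides at `t = 1`
(under the integral sign, by dominated convergence) yields
`∫_A ‖y‖² exp (-‖y‖² / 2) dy = n ∫_A exp (-‖y‖² / 2) dy`, which is the claim since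
`∑ i, (1 - y i ^ 2) = n - ‖y‖²`.
-/

open Module Real Filter Topology

theorem setIntegral_comp_smul_of_cone {E F : Type*} [NormedAddCommGroup E] [NormedSpace ℝ E]
    [MeasurableSpace E] [BorelSpace E] [FiniteDimensional ℝ E] (μ : Measure E)
    [μ.IsAddHaarMeasure] [NormedAddCommGroup F] [NormedSpace ℝ F] (f : E → F) {A : Set E}
    (hcone : ∀ t : ℝ, 0 < t → t • A = A) {t : ℝ} (ht : 0 < t) :
    ∫ x in A, f (t • x) ∂μ = (t ^ finrank ℝ E)⁻¹ • ∫ x in A, f x ∂μ := by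
  rw [Measure.setIntegral_comp_smul_of_pos μ f A ht, hcone t ht]

section Gaussian

variable {V : Type*} [NormedAddCommGroup V] [InnerProductSpace ℝ V] [FiniteDimensional ℝ V]
  [MeasurableSpace V] [BorelSpace V]

theorem integrable_exp_neg_mul_sq_norm {b : ℝ} (hb : 0 < b) :
    Integrable (fun v : V => exp (-b * ‖v‖ ^ 2)) := by
  have := (GaussianFourier.integrable_cexp_neg_mul_sq_norm_add (V := V) (b := b)
    (by simpa using hb) 0 0).re
  simpa [← Complex.ofReal_pow, ← Complex.ofReal_mul, ← Complex.ofReal_neg,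
    ← Complex.ofReal_exp] using this

theorem integrable_sq_norm_mul_exp_neg_mul_sq_norm {b : ℝ} (hb : 0 < b) :
    Integrable (fun v : V => ‖v‖ ^ 2 * exp (-b * ‖v‖ ^ 2)) := by
  refine ((integrable_exp_neg_mul_sq_norm (half_pos hb)).const_mul (2 / b)).mono'
    (by fun_prop) (.of_forall fun v => ?_)
  have hs := add_one_le_exp (b / 2 * ‖v‖ ^ 2)
  rw [Real.norm_of_nonneg (by positivity)]
  calc ‖v‖ ^ 2 * exp (-b * ‖v‖ ^ 2)
      ≤ 2 / b * exp (b / 2 * ‖v‖ ^ 2) * exp (-b * ‖v‖ ^ 2) := by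
        gcongr
        rw [div_mul_eq_mul_div, le_div_iff₀' hb]
        linarith
    _ = 2 / b * exp (-(b / 2) * ‖v‖ ^ 2) := by
        rw [mul_assoc, ← exp_add]; ring_nf

theorem hasDerivAt_setIntegral_exp_neg_sq_norm_smul (s : Set V) :
    HasDerivAt (fun t : ℝ => ∫ v in s, exp (-‖t • v‖ ^ 2 / 2))
      (∫ v in s, -‖v‖ ^ 2 * exp (-‖v‖ ^ 2 / 2)) 1 := by
  simp_rw [norm_smul, mul_pow, Real.norm_eq_abs, sq_abs]
  have hbound : ∀ v : V, ∀ t ∈ Set.Ioo (1 / 2 : ℝ) 2,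
      ‖-t * ‖v‖ ^ 2 * exp (-(t ^ 2 * ‖v‖ ^ 2) / 2)‖ ≤ 2 * (‖v‖ ^ 2 * exp (-(1 / 8) * ‖v‖ ^ 2)) := by
    rintro v t ⟨ht₁, ht₂⟩
    rw [Real.norm_eq_abs, abs_mul, abs_mul, abs_neg, abs_of_pos (by linarith),
      abs_of_nonneg (by positivity), abs_of_pos (exp_pos _), ← mul_assoc]
    have ht : 1 / 4 ≤ t ^ 2 := by nlinarith
    gcongr
    nlinarith [mul_le_mul_of_nonneg_right ht (sq_nonneg ‖v‖)]
  have hderiv : ∀ v : V, ∀ t : ℝ, HasDerivAt (fun t => exp (-(t ^ 2 * ‖v‖ ^ 2) / 2))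
      (-t * ‖v‖ ^ 2 * exp (-(t ^ 2 * ‖v‖ ^ 2) / 2)) t := by
    intro v t
    refine (((hasDerivAt_pow 2 t).mul_const (‖v‖ ^ 2)).neg.div_const 2).exp.congr_deriv ?_
    simp only [Pi.neg_apply]
    push_cast
    ring
  have hint : Integrable (fun v : V => exp (-(1 ^ 2 * ‖v‖ ^ 2) / 2)) (volume.restrict s) :=
    (integrable_exp_neg_mul_sq_norm (half_pos one_pos)).restrict.congr
      (.of_forall fun v => by ring_nf)
  simpa using (hasDerivAt_integral_of_dominated_loc_of_deriv_le (μ := volume.restrict s)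
    (Ioo_mem_nhds (by norm_num : (1 / 2 : ℝ) < 1) (by norm_num : (1 : ℝ) < 2))
    (.of_forall fun t => by fun_prop) hint (by fun_prop) (.of_forall hbound)
    ((integrable_sq_norm_mul_exp_neg_mul_sq_norm (by norm_num)).const_mul 2).restrict
    (.of_forall fun v t _ => hderiv v t)).2

theorem setIntegral_finrank_sub_sq_norm_mul_exp_of_cone {A : Set V}
    (hcone : ∀ t : ℝ, 0 < t → t • A = A) :
    ∫ v in A, (finrank ℝ V - ‖v‖ ^ 2) * exp (-‖v‖ ^ 2 / 2) = 0 := by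
  set C := ∫ v in A, exp (-‖v‖ ^ 2 / 2)
  have hscale : (fun t : ℝ => ∫ v in A, exp (-‖t • v‖ ^ 2 / 2))
      =ᶠ[𝓝 1] fun t => (t ^ finrank ℝ V)⁻¹ * C := by
    filter_upwards [Ioi_mem_nhds one_pos] with t ht
    exact setIntegral_comp_smul_of_cone volume (fun v : V => exp (-‖v‖ ^ 2 / 2)) hcone ht
  have hderiv : HasDerivAt (fun t : ℝ => (t ^ finrank ℝ V)⁻¹ * C) (-finrank ℝ V * C) 1 := by
    refine (((hasDerivAt_pow _ 1).inv (by simp)).mul_const C).congr_deriv ?_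
    simp
  have hmoment : ∫ v in A, -‖v‖ ^ 2 * exp (-‖v‖ ^ 2 / 2) = -finrank ℝ V * C :=
    (hasDerivAt_setIntegral_exp_neg_sq_norm_smul A).unique (hderiv.congr_of_eventuallyEq hscale)
  have hint : IntegrableOn (fun v : V => exp (-‖v‖ ^ 2 / 2)) A :=
    (integrable_exp_neg_mul_sq_norm (half_pos one_pos)).restrict.congr
      (.of_forall fun v => by ring_nf)
  have hint' : IntegrableOn (fun v : V => -‖v‖ ^ 2 * exp (-‖v‖ ^ 2 / 2)) A :=
    (integrable_sq_norm_mul_exp_neg_mul_sq_norm (half_pos one_pos)).neg.restrict.congr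
      (.of_forall fun v => by simp only [Pi.neg_apply]; ring_nf)
  calc ∫ v in A, (finrank ℝ V - ‖v‖ ^ 2) * exp (-‖v‖ ^ 2 / 2)
      = ∫ v in A, (finrank ℝ V * exp (-‖v‖ ^ 2 / 2) + -‖v‖ ^ 2 * exp (-‖v‖ ^ 2 / 2)) := by
        congr! 2 with v; ring
    _ = finrank ℝ V * C + -finrank ℝ V * C := by
        rw [integral_add (hint.const_mul _) hint', integral_const_mul, hmoment]
    _ = 0 := by ring

end Gaussian

theorem setIntegral_gauss (n : ℕ) (s : Set (EuclideanSpace ℝ (Fin n)))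
    (g : EuclideanSpace ℝ (Fin n) → ℝ) :
    ∫ y in s, g y ∂gauss n = (2 * π) ^ (-(n : ℝ) / 2) * ∫ y in s, exp (-‖y‖ ^ 2 / 2) * g y := by
  rw [gauss, setIntegral_withDensity_eq_setIntegral_toReal_smul' s (by fun_prop)
    (.of_forall fun _ => ENNReal.ofReal_lt_top), ← integral_const_mul]
  congr! 2 with y
  rw [ENNReal.toReal_ofReal (by positivity), smul_eq_mul, mul_assoc]

theorem cone_integral_zero_general (n : ℕ) (A : Set (EuclideanSpace ℝ (Fin n)))
    (hcone : ∀ t : ℝ, 0 < t → t • A = A) :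
    ∫ y in A, (∑ i, (1 - (y i) ^ 2)) ∂(gauss n) = 0 := by
  have hintegrand (y : EuclideanSpace ℝ (Fin n)) :
      exp (-‖y‖ ^ 2 / 2) * ∑ i, (1 - (y i) ^ 2) = (n - ‖y‖ ^ 2) * exp (-‖y‖ ^ 2 / 2) := by
    simp [Finset.sum_sub_distrib, EuclideanSpace.real_norm_sq_eq, mul_comm]
  have hkey := setIntegral_finrank_sub_sq_norm_mul_exp_of_cone hcone
  rw [finrank_euclideanSpace_fin] at hkey
  simp_rw [setIntegral_gauss, hintegrand, hkey, mul_zero]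

theorem cone_integral_zero (n : ℕ) (A : Set (EuclideanSpace ℝ (Fin n)))
    (hA : MeasurableSet A) (hcone : ∀ t : ℝ, 0 < t → t • A = A) :
    ∫ y in A, (∑ i, (1 - (y i) ^ 2)) ∂(gauss n) = 0 :=
  cone_integral_zero_general n A hcone
end

section
/- For every multi-index ℓ = (ℓ_1,…,ℓ_n) ∈ ℕⁿ with |ℓ| ≥ 1 and every x = (x_1,…,x_n) ∈ ℝⁿ, |h_ℓ(x)| √(ℓ!) ≤ |ℓ|^n 3^{|ℓ|} ∏_{i=1}^n max{1, |x_i|^{ℓ_i}}. -/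
open MeasureTheory

/-- The Hermite polynomial `h_ℓ` normalized by the generating function
`e^{λx - λ²/2} = Σ_ℓ λ^ℓ h_ℓ(x)`, i.e. `h_ℓ = He_ℓ / ℓ!` where `He_ℓ` is the
probabilists' Hermite polynomial. -/
noncomputable def hermiteh (ℓ : ℕ) (x : ℝ) : ℝ :=
  (Polynomial.aeval x (Polynomial.hermite ℓ)) / (Nat.factorial ℓ)

/-!
The coefficients of the probabilists' Hermite polynomial satisfy
`|[X^k] He_m| ≤ (m - k - 1)‼ * (m choose k)` and `(m - k - 1)‼ ^ 2 ≤ (m - k)! ≤ m!`, so summing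
over `k` gives `|He_m(x)| ≤ 2^m √(m!) max(1, |x|^m)`. As `h_m = He_m / m!`, this reads
`|h_m(x)| √(m!) ≤ 2^m max(1, |x|^m)`. The multivariate bound is the product of these
one-variable bounds, with `2^|ℓ| ≤ 3^|ℓ|` and `1 ≤ |ℓ|^n` as slack.
-/

open scoped Nat

namespace Nat

theorem doubleFactorial_le_doubleFactorial_succ : ∀ m : ℕ, m‼ ≤ (m + 1)‼
  | 0 | 1 => by decide
  | m + 2 => by
    rw [doubleFactorial_add_two, show m + 2 + 1 = m + 1 + 2 from rfl, doubleFactorial_add_two]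
    exact Nat.mul_le_mul (by omega) (doubleFactorial_le_doubleFactorial_succ m)

theorem doubleFactorial_sq_le_factorial_succ (m : ℕ) : m‼ ^ 2 ≤ (m + 1)! := by
  rw [sq, factorial_eq_mul_doubleFactorial]
  exact Nat.mul_le_mul_right _ (doubleFactorial_le_doubleFactorial_succ m)

end Nat

theorem pow_le_max_one_pow {R : Type*} [Semiring R] [LinearOrder R] [IsStrictOrderedRing R]
    {x : R} (hx : 0 ≤ x) {k m : ℕ} (hkm : k ≤ m) : x ^ k ≤ max 1 (x ^ m) := by
  rcases le_total x 1 with h | h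
  · exact le_max_of_le_left (pow_le_one₀ hx h)
  · exact le_max_of_le_right (pow_le_pow_right₀ h hkm)

namespace Polynomial

theorem abs_coeff_hermite_le (m k : ℕ) :
    |((hermite m).coeff k : ℝ)| ≤ √(m ! : ℝ) * m.choose k := by
  have hdf : ((m - k - 1)‼ : ℝ) ≤ √(m ! : ℝ) := by
    rw [Real.le_sqrt' (by positivity)]
    have hfac : (m - k - 1 + 1)! ≤ m ! := by
      rcases m.eq_zero_or_pos with rfl | hm
      · simp
      · exact Nat.factorial_le (by omega)
    exact_mod_cast (Nat.doubleFactorial_sq_le_factorial_succ _).trans hfac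
  rw [coeff_hermite]
  split_ifs
  · push_cast
    rw [abs_mul, abs_mul, abs_pow, abs_neg, abs_one, one_pow, one_mul,
      abs_of_nonneg (by positivity), abs_of_nonneg (by positivity)]
    gcongr
  · simp only [Int.cast_zero, abs_zero]
    positivity

theorem abs_aeval_hermite_le (m : ℕ) (x : ℝ) :
    |aeval x (hermite m)| ≤ 2 ^ m * √(m ! : ℝ) * max 1 (|x| ^ m) := by
  rw [aeval_eq_sum_range (R := ℤ) x, natDegree_hermite]
  calc |∑ k ∈ Finset.range (m + 1), (hermite m).coeff k • x ^ k|
      ≤ ∑ k ∈ Finset.range (m + 1), √(m ! : ℝ) * m.choose k * max 1 (|x| ^ m) := by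
        refine (Finset.abs_sum_le_sum_abs _ _).trans (Finset.sum_le_sum fun k hk => ?_)
        rw [zsmul_eq_mul, abs_mul, abs_pow]
        exact mul_le_mul (abs_coeff_hermite_le m k)
          (pow_le_max_one_pow (abs_nonneg x) (Finset.mem_range_succ_iff.mp hk))
          (by positivity) (by positivity)
    _ = 2 ^ m * √(m ! : ℝ) * max 1 (|x| ^ m) := by
        rw [← Finset.sum_mul, ← Finset.mul_sum, ← Nat.cast_sum, Nat.sum_range_choose]
        push_cast
        ring

end Polynomial

theorem abs_hermiteh_mul_sqrt_factorial_le (m : ℕ) (x : ℝ) :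
    |hermiteh m x| * √(m ! : ℝ) ≤ 2 ^ m * max 1 (|x| ^ m) := by
  have hfac : (0 : ℝ) < m ! := by positivity
  calc |hermiteh m x| * √(m ! : ℝ)
      = |Polynomial.aeval x (Polynomial.hermite m)| / √(m ! : ℝ) := by
        rw [hermiteh, abs_div, abs_of_pos hfac, div_mul_eq_mul_div,
          div_eq_div_iff hfac.ne' (Real.sqrt_pos.mpr hfac).ne', mul_assoc,
          Real.mul_self_sqrt hfac.le]
    _ ≤ 2 ^ m * max 1 (|x| ^ m) := by
        rw [div_le_iff₀ (Real.sqrt_pos.mpr hfac), mul_right_comm]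
        exact Polynomial.abs_aeval_hermite_le m x

theorem hermite_bound (n : ℕ) (ℓ : Fin n → ℕ) (hl : 1 ≤ ∑ i, ℓ i)
    (x : EuclideanSpace ℝ (Fin n)) :
    |∏ i, hermiteh (ℓ i) (x i)| * Real.sqrt (∏ i, (Nat.factorial (ℓ i) : ℝ))
      ≤ ((∑ i, ℓ i : ℕ) : ℝ) ^ n * 3 ^ (∑ i, ℓ i) *
        ∏ i, max 1 (|x i| ^ (ℓ i)) := by
  have hslack : (1 : ℝ) ≤ ((∑ i, ℓ i : ℕ) : ℝ) ^ n := one_le_pow₀ (by exact_mod_cast hl)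
  rw [Real.sqrt_prod _ fun i _ => by positivity, Finset.abs_prod, ← Finset.prod_mul_distrib]
  calc ∏ i, |hermiteh (ℓ i) (x i)| * √((ℓ i)! : ℝ)
      ≤ ∏ i, (3 : ℝ) ^ ℓ i * max 1 (|x i| ^ ℓ i) := by
        refine Finset.prod_le_prod (fun i _ => by positivity) fun i _ => ?_
        refine (abs_hermiteh_mul_sqrt_factorial_le (ℓ i) (x i)).trans ?_
        gcongr
        norm_num
    _ = 1 * 3 ^ (∑ i, ℓ i) * ∏ i, max 1 (|x i| ^ ℓ i) := by
        rw [Finset.prod_mul_distrib, Finset.prod_pow_eq_pow_sum, one_mul]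
    _ ≤ ((∑ i, ℓ i : ℕ) : ℝ) ^ n * 3 ^ (∑ i, ℓ i) * ∏ i, max 1 (|x i| ^ ℓ i) := by
        gcongr
end

section
/- Let η > 0, t > 0 and n ≥ 2. Then ∫_{[-η,η] × [t,∞) × ℝ^{n-2}} Σ_{ℓ ∈ ℕⁿ, 0 ≤ |ℓ| ≤ 3} ∏_{i=1}^n |y_i|^{ℓ_i} dγ_n(y) ≤ 3000 n³ η (t² + 2) e^{-t²/2}. -/
open MeasureTheory

/-- The finite set of multi-indices `ℓ ∈ ℕⁿ` with `|ℓ| = Σᵢ ℓᵢ ≤ 3`. -/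
def multiIdx3 (n : ℕ) : Finset (Fin n → ℕ) :=
  Finset.filter (fun ℓ => ∑ i, ℓ i ≤ 3) (Finset.Iic fun _ => 3)

/-
The Gaussian density factorises over the coordinates, so by Fubini the integral of each monomial
`∏ᵢ |yᵢ|^ℓᵢ` over `[-η, η] × [t, ∞) × ℝⁿ⁻²` is a product of one-dimensional integrals against the
standard normal density `φ`. On `[-η, η]` the integrand `|x|^k φ(x)` (`k ≤ 3`) is at most `1`,
giving `2η`; on `[t, ∞)`, `|x|^k e^{-x²/2}` is dominated by the derivative of
`-(2x² - x + 5) e^{-x²/2}`, giving `(t² + 2) e^{-t²/2}`; on `ℝ` the integral is `1` for `k = 0` and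
at most `4` otherwise, so the remaining coordinates contribute at most `4^|ℓ| ≤ 64`. Finally there
are at most `(n + 1)³ ≤ 8n³` multi-indices with `|ℓ| ≤ 3`.
-/

open ProbabilityTheory Real Set Filter Topology

lemma gaussianPDFReal_zero_one (x : ℝ) :
    gaussianPDFReal 0 1 x = (√(2 * π))⁻¹ * exp (-x ^ 2 / 2) := by
  simp [gaussianPDFReal]

lemma inv_sqrt_two_pi_le : (√(2 * π))⁻¹ ≤ 2 / 5 := by
  rw [inv_le_comm₀ (by positivity) (by norm_num), Real.le_sqrt (by norm_num) (by positivity)]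
  nlinarith [pi_gt_d2]

lemma integrable_abs_pow_mul_gaussianPDFReal (k : ℕ) :
    Integrable fun x => |x| ^ k * gaussianPDFReal 0 1 x := by
  have h := (memLp_id_gaussianReal (μ := 0) (v := 1) k).integrable_norm_pow'
  rw [gaussianReal_of_var_ne_zero _ one_ne_zero, gaussianPDF_def,
    integrable_withDensity_iff_integrable_smul' (by fun_prop) (by simp)] at h
  refine h.congr (ae_of_all _ fun x => ?_)
  simp [ENNReal.toReal_ofReal (gaussianPDFReal_nonneg 0 1 x), mul_comm]

lemma abs_pow_mul_gaussianPDFReal_le_one {k : ℕ} (hk : k ≤ 3) (x : ℝ) :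
    |x| ^ k * gaussianPDFReal 0 1 x ≤ 1 := by
  have hfact : (x ^ 2) ^ k ≤ 6 * exp (x ^ 2) := by
    have h := pow_div_factorial_le_exp (x := x ^ 2) (sq_nonneg x) k
    have h6 : (k.factorial : ℝ) ≤ 6 := by
      exact_mod_cast (Nat.factorial_le hk).trans (by decide)
    rw [div_le_iff₀ (by positivity)] at h
    nlinarith [exp_pos (x ^ 2)]
  have hsq : (|x| ^ k * exp (-x ^ 2 / 2)) ^ 2 ≤ 6 := by
    calc (|x| ^ k * exp (-x ^ 2 / 2)) ^ 2 = (x ^ 2) ^ k * exp (-x ^ 2) := by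
          rw [mul_pow, ← exp_nat_mul, ← pow_mul, mul_comm k 2, pow_mul, sq_abs]; ring_nf
      _ ≤ 6 * exp (x ^ 2) * exp (-x ^ 2) := by gcongr
      _ = 6 := by rw [mul_assoc, ← exp_add]; simp
  have ha : |x| ^ k * exp (-x ^ 2 / 2) ≤ 5 / 2 := by
    nlinarith [sq_nonneg (|x| ^ k * exp (-x ^ 2 / 2))]
  rw [gaussianPDFReal_zero_one, mul_left_comm]
  calc (√(2 * π))⁻¹ * (|x| ^ k * exp (-x ^ 2 / 2)) ≤ 2 / 5 * (5 / 2) :=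
        mul_le_mul inv_sqrt_two_pi_le ha (by positivity) (by norm_num)
    _ = 1 := by norm_num

lemma tendsto_pow_mul_exp_neg_sq_div_two (k : ℕ) :
    Tendsto (fun x : ℝ => x ^ k * exp (-x ^ 2 / 2)) atTop (𝓝 0) := by
  have h := (rpow_mul_exp_neg_mul_sq_isLittleO_exp_neg one_half_pos k).tendsto_zero_of_tendsto
    (tendsto_exp_atBot.comp <| tendsto_id.const_mul_atTop_of_neg (neg_lt_zero.mpr one_half_pos))
  refine h.congr fun x => ?_
  rw [rpow_natCast]; ring_nf

lemma integral_Ioi_abs_pow_mul_exp_neg_sq_le {k : ℕ} (hk : k ≤ 3) {t : ℝ} (ht : 0 ≤ t) :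
    ∫ x in Ioi t, |x| ^ k * exp (-x ^ 2 / 2) ≤ (2 * t ^ 2 + 5) * exp (-t ^ 2 / 2) := by
  set g : ℝ → ℝ := fun x => -((2 * x ^ 2 - x + 5) * exp (-x ^ 2 / 2))
  set g' : ℝ → ℝ := fun x => (2 * x ^ 3 - x ^ 2 + x + 1) * exp (-x ^ 2 / 2)
  have hderiv : ∀ x ∈ Ici t, HasDerivAt g (g' x) x := fun x _ => by
    have hexp : HasDerivAt (fun x : ℝ => -x ^ 2 / 2) (-x) x :=
      ((hasDerivAt_pow 2 x).neg.div_const 2).congr_deriv (by ring)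
    have hpoly : HasDerivAt (fun x : ℝ => 2 * x ^ 2 - x + 5) (4 * x - 1) x :=
      ((((hasDerivAt_pow 2 x).const_mul 2).sub (hasDerivAt_id' x)).add_const 5).congr_deriv
        (by ring)
    exact (hpoly.mul hexp.exp).neg.congr_deriv (by simp only [g']; ring)
  have hpos : ∀ x ∈ Ioi t, 0 ≤ g' x := fun x hx => by
    have : 0 ≤ x := ht.trans hx.out.le
    have : 0 ≤ 2 * x ^ 3 - x ^ 2 + x + 1 := by nlinarith [sq_nonneg (x - 1)]
    positivity
  have hlim : Tendsto g atTop (𝓝 0) := by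
    have := (((tendsto_pow_mul_exp_neg_sq_div_two 2).const_mul 2).sub
      (tendsto_pow_mul_exp_neg_sq_div_two 1)).add
      ((tendsto_pow_mul_exp_neg_sq_div_two 0).const_mul 5)
    convert this.neg using 1
    · ext x; simp only [g]; ring
    · simp
  have hle : ∀ x ∈ Ioi t, |x| ^ k * exp (-x ^ 2 / 2) ≤ g' x := fun x hx => by
    have hx : 0 ≤ x := ht.trans hx.out.le
    have : x ^ k ≤ 2 * x ^ 3 - x ^ 2 + x + 1 := by
      interval_cases k <;> nlinarith [sq_nonneg (x - 1), mul_nonneg hx (sq_nonneg (x - 1))]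
    rw [abs_of_nonneg hx]
    exact mul_le_mul_of_nonneg_right this (exp_pos _).le
  calc ∫ x in Ioi t, |x| ^ k * exp (-x ^ 2 / 2) ≤ ∫ x in Ioi t, g' x :=
        integral_mono_of_nonneg
          (ae_restrict_of_forall_mem measurableSet_Ioi fun x _ => by positivity)
          (integrableOn_Ioi_deriv_of_nonneg' hderiv hpos hlim)
          (ae_restrict_of_forall_mem measurableSet_Ioi hle)
    _ = 0 - g t := integral_Ioi_of_hasDerivAt_of_nonneg' hderiv hpos hlim
    _ ≤ (2 * t ^ 2 + 5) * exp (-t ^ 2 / 2) := by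
        simp only [g]; nlinarith [exp_pos (-t ^ 2 / 2)]

lemma setIntegral_Icc_abs_pow_mul_gaussianPDFReal_le {k : ℕ} (hk : k ≤ 3) {η : ℝ} (hη : 0 ≤ η) :
    ∫ x in Icc (-η) η, |x| ^ k * gaussianPDFReal 0 1 x ≤ 2 * η := by
  have h := norm_setIntegral_le_of_norm_le_const (μ := volume)
    (f := fun x => |x| ^ k * gaussianPDFReal 0 1 x) (C := 1)
    (measure_Icc_lt_top (a := -η) (b := η)) fun x _ => by
      rw [Real.norm_of_nonneg (mul_nonneg (by positivity) (gaussianPDFReal_nonneg 0 1 x))]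
      exact abs_pow_mul_gaussianPDFReal_le_one hk x
  rw [Real.volume_real_Icc_of_le (by linarith)] at h
  exact (Real.le_norm_self _).trans (h.trans_eq (by ring))

lemma setIntegral_Ici_abs_pow_mul_gaussianPDFReal_le {k : ℕ} (hk : k ≤ 3) {t : ℝ} (ht : 0 ≤ t) :
    ∫ x in Ici t, |x| ^ k * gaussianPDFReal 0 1 x ≤ (t ^ 2 + 2) * exp (-t ^ 2 / 2) := by
  simp_rw [integral_Ici_eq_integral_Ioi, gaussianPDFReal_zero_one, mul_left_comm (|_| ^ k)]
  rw [integral_const_mul]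
  calc (√(2 * π))⁻¹ * ∫ x in Ioi t, |x| ^ k * exp (-x ^ 2 / 2)
      ≤ 2 / 5 * ((2 * t ^ 2 + 5) * exp (-t ^ 2 / 2)) :=
        mul_le_mul inv_sqrt_two_pi_le (integral_Ioi_abs_pow_mul_exp_neg_sq_le hk ht)
          (setIntegral_nonneg measurableSet_Ioi fun _ _ => by positivity) (by norm_num)
    _ ≤ (t ^ 2 + 2) * exp (-t ^ 2 / 2) := by nlinarith [exp_pos (-t ^ 2 / 2), sq_nonneg t]

lemma integral_abs_pow_mul_gaussianPDFReal_le {k : ℕ} (hk : k ≤ 3) :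
    ∫ x, |x| ^ k * gaussianPDFReal 0 1 x ≤ 4 ^ k := by
  rcases Nat.eq_zero_or_pos k with rfl | hk0
  · simp [integral_gaussianPDFReal_eq_one]
  have heven : (fun x => |x| ^ k * gaussianPDFReal 0 1 x) =
      fun x => (fun y => |y| ^ k * gaussianPDFReal 0 1 y) |x| := by
    ext x; simp [gaussianPDFReal_zero_one]
  have h := setIntegral_Ici_abs_pow_mul_gaussianPDFReal_le hk le_rfl
  rw [integral_Ici_eq_integral_Ioi] at h
  rw [heven, integral_comp_abs (f := fun y => |y| ^ k * gaussianPDFReal 0 1 y)]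
  calc 2 * ∫ x in Ioi 0, |x| ^ k * gaussianPDFReal 0 1 x ≤ 2 * 2 := by norm_num at h; linarith
    _ = 4 ^ 1 := by norm_num
    _ ≤ 4 ^ k := pow_le_pow_right₀ (by norm_num) hk0

lemma gauss_density_eq_prod {n : ℕ} (y : EuclideanSpace ℝ (Fin n)) :
    (2 * π) ^ (-(n : ℝ) / 2) * exp (-‖y‖ ^ 2 / 2) = ∏ i, gaussianPDFReal 0 1 (y i) := by
  simp_rw [gaussianPDFReal_zero_one, Finset.prod_mul_distrib, ← exp_sum, Finset.prod_const,
    Finset.card_univ, Fintype.card_fin, EuclideanSpace.norm_sq_eq, Real.norm_eq_abs, sq_abs,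
    ← Finset.sum_div, ← Finset.sum_neg_distrib]
  congr 1
  rw [show -(n : ℝ) / 2 = (1 / 2 : ℝ) * n * -1 by ring, rpow_mul (by positivity),
    rpow_mul (by positivity), rpow_natCast, ← sqrt_eq_rpow, rpow_neg_one, inv_pow]

lemma gauss_density_toReal_smul_prod {n : ℕ} (y : EuclideanSpace ℝ (Fin n))
    (f : Fin n → ℝ → ℝ) :
    (ENNReal.ofReal ((2 * π) ^ (-(n : ℝ) / 2) * exp (-‖y‖ ^ 2 / 2))).toReal • ∏ i, f i (y i) =
      ∏ i, f i (y i) * gaussianPDFReal 0 1 (y i) := by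
  rw [ENNReal.toReal_ofReal (by positivity), gauss_density_eq_prod, smul_eq_mul,
    ← Finset.prod_mul_distrib]
  simp_rw [mul_comm]

theorem setIntegral_gauss_pi_prod {n : ℕ} {s : Fin n → Set ℝ} (hs : ∀ i, MeasurableSet (s i))
    (f : Fin n → ℝ → ℝ) :
    ∫ y in {y : EuclideanSpace ℝ (Fin n) | ∀ i, y i ∈ s i}, ∏ i, f i (y i) ∂gauss n =
      ∏ i, ∫ x in s i, f i x * gaussianPDFReal 0 1 x := by
  set S := {y : EuclideanSpace ℝ (Fin n) | ∀ i, y i ∈ s i}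
  have hS : MeasurableSet S := by
    simp only [S, Set.ofPred_forall]
    exact MeasurableSet.iInter fun i => (hs i).preimage (by fun_prop)
  have hind : ∀ y : EuclideanSpace ℝ (Fin n),
      S.indicator (fun y => (ENNReal.ofReal ((2 * π) ^ (-(n : ℝ) / 2) * exp (-‖y‖ ^ 2 / 2))).toReal
        • ∏ i, f i (y i)) y =
        ∏ i, (s i).indicator (fun x => f i x * gaussianPDFReal 0 1 x) (y i) := by
    intro y
    by_cases hy : y ∈ S
    · rw [indicator_of_mem hy, gauss_density_toReal_smul_prod]
      exact Finset.prod_congr rfl fun i _ =>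
        (indicator_of_mem (hy i) (fun x => f i x * gaussianPDFReal 0 1 x)).symm
    · obtain ⟨i, hi⟩ : ∃ i, y i ∉ s i := by simpa [S] using hy
      rw [indicator_of_notMem hy,
        Finset.prod_eq_zero (Finset.mem_univ i) (indicator_of_notMem hi _)]
  rw [gauss, setIntegral_withDensity_eq_setIntegral_toReal_smul (by fun_prop)
    (ae_of_all _ fun _ => ENNReal.ofReal_lt_top) _ hS, ← integral_indicator hS]
  simp_rw [hind, ← integral_indicator (hs _)]
  rw [← integral_fintype_prod_volume_eq_prod,
    ← (EuclideanSpace.volume_preserving_symm_measurableEquiv_toLp (Fin n)).integral_comp']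
  rfl

lemma integrable_gauss_prod {n : ℕ} {f : Fin n → ℝ → ℝ}
    (hf : ∀ i, Integrable fun x => f i x * gaussianPDFReal 0 1 x) :
    Integrable (fun y : EuclideanSpace ℝ (Fin n) => ∏ i, f i (y i)) (gauss n) := by
  rw [gauss, integrable_withDensity_iff_integrable_smul' (by fun_prop)
    (ae_of_all _ fun _ => ENNReal.ofReal_lt_top)]
  simp_rw [gauss_density_toReal_smul_prod]
  exact ((EuclideanSpace.volume_preserving_symm_measurableEquiv_toLp (Fin n)).integrable_comp_emb
    (MeasurableEquiv.measurableEmbedding _)).mpr (Integrable.fintype_prod hf)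

lemma card_le_pow_of_sum_le {ι : Type*} [Fintype ι] [DecidableEq ι] (k : ℕ)
    (A : Finset (ι → ℕ)) (hA : ∀ ℓ ∈ A, ∑ i, ℓ i ≤ k) : A.card ≤ (Fintype.card ι + 1) ^ k := by
  induction k generalizing A with
  | zero =>
    refine (Finset.card_le_card fun ℓ hℓ => ?_).trans (Finset.card_singleton (0 : ι → ℕ)).le
    simpa [funext_iff] using hA ℓ hℓ
  | succ k ih =>
    -- every `ℓ` of weight `k + 1` is `ℓ' + single i 1` for some `ℓ'` of weight `k`
    let bump : Option ι → ι → ℕ := fun o => o.elim 0 (Pi.single · 1)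
    let B := ((A ×ˢ Finset.univ).image fun p => p.1 - bump p.2).filter fun ℓ => ∑ i, ℓ i ≤ k
    have hAB : A ⊆ (B ×ˢ Finset.univ).image fun p => p.1 + bump p.2 := by
      intro ℓ hℓ
      simp only [Finset.mem_image, Finset.mem_product, Finset.mem_univ, and_true, Prod.exists, B,
        Finset.mem_filter]
      by_cases hsum : ∑ i, ℓ i ≤ k
      · exact ⟨ℓ, none, ⟨⟨ℓ, none, hℓ, by simp [bump]⟩, hsum⟩, by simp [bump]⟩
      obtain ⟨i, hi⟩ : ∃ i, ℓ i ≠ 0 := by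
        by_contra! h; simp [h] at hsum
      have hcancel : ℓ - Pi.single i 1 + Pi.single i 1 = ℓ := by
        ext j; rcases eq_or_ne j i with rfl | hj <;> simp [*]; omega
      refine ⟨ℓ - Pi.single i 1, some i, ⟨⟨ℓ, some i, hℓ, rfl⟩, ?_⟩, hcancel⟩
      have hsum' := congrArg (fun ℓ : ι → ℕ => ∑ j, ℓ j) hcancel
      simp only [Pi.add_apply, Finset.sum_add_distrib, Finset.sum_pi_single', Finset.mem_univ,
        if_true] at hsum'
      have := hA ℓ hℓ
      omega
    calc A.card ≤ (B ×ˢ (Finset.univ : Finset (Option ι))).card :=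
          (Finset.card_le_card hAB).trans Finset.card_image_le
      _ ≤ (Fintype.card ι + 1) ^ k * (Fintype.card ι + 1) := by
        rw [Finset.card_product, Finset.card_univ, Fintype.card_option]
        exact Nat.mul_le_mul_right _ (ih B fun ℓ hℓ => (Finset.mem_filter.1 hℓ).2)
      _ = (Fintype.card ι + 1) ^ (k + 1) := (pow_succ _ _).symm

lemma card_multiIdx3_le {n : ℕ} (hn : 1 ≤ n) : ((multiIdx3 n).card : ℝ) ≤ 8 * (n : ℝ) ^ 3 := by
  have h := card_le_pow_of_sum_le 3 (multiIdx3 n) fun ℓ hℓ => (Finset.mem_filter.1 hℓ).2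
  rw [Fintype.card_fin] at h
  have hn' : (n : ℝ) + 1 ≤ 2 * n := by
    have : (1 : ℝ) ≤ n := by exact_mod_cast hn
    linarith
  calc ((multiIdx3 n).card : ℝ) ≤ ((n : ℝ) + 1) ^ 3 := by exact_mod_cast h
    _ ≤ (2 * (n : ℝ)) ^ 3 := by gcongr
    _ = 8 * (n : ℝ) ^ 3 := by ring

def stripBox (η t : ℝ) (m : ℕ) : Fin (m + 2) → Set ℝ :=
  Fin.cons (Icc (-η) η) (Fin.cons (Ici t) fun _ => univ)

lemma measurableSet_stripBox (η t : ℝ) (m : ℕ) (i : Fin (m + 2)) :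
    MeasurableSet (stripBox η t m i) := by
  refine Fin.cases ?_ (Fin.cases ?_ fun _ => ?_) i <;> simp [stripBox, measurableSet_Icc]

lemma prod_setIntegral_stripBox_le {m : ℕ} {η t : ℝ} (hη : 0 ≤ η) (ht : 0 ≤ t)
    {ℓ : Fin (m + 2) → ℕ} (hℓ : ∑ i, ℓ i ≤ 3) :
    ∏ i, ∫ x in stripBox η t m i, |x| ^ ℓ i * gaussianPDFReal 0 1 x ≤
      2 * η * ((t ^ 2 + 2) * exp (-t ^ 2 / 2) * 4 ^ 3) := by
  have hle : ∀ i, ℓ i ≤ 3 := fun i =>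
    (Finset.single_le_sum (fun _ _ => Nat.zero_le _) (Finset.mem_univ i)).trans hℓ
  have hnonneg : ∀ (μ : Measure ℝ) k, 0 ≤ ∫ x, |x| ^ k * gaussianPDFReal 0 1 x ∂μ := fun μ k =>
    integral_nonneg fun x => mul_nonneg (by positivity) (gaussianPDFReal_nonneg 0 1 x)
  have hrest : ∏ j : Fin m, ∫ x, |x| ^ ℓ j.succ.succ * gaussianPDFReal 0 1 x ≤ 4 ^ 3 :=
    calc ∏ j : Fin m, ∫ x, |x| ^ ℓ j.succ.succ * gaussianPDFReal 0 1 x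
        ≤ ∏ j : Fin m, (4 : ℝ) ^ ℓ j.succ.succ :=
          Finset.prod_le_prod (fun j _ => hnonneg volume _)
            fun j _ => integral_abs_pow_mul_gaussianPDFReal_le (hle _)
      _ = 4 ^ ∑ j : Fin m, ℓ j.succ.succ := Finset.prod_pow_eq_pow_sum _ _ _
      _ ≤ 4 ^ 3 := pow_le_pow_right₀ (by norm_num) <| by
          rw [Fin.sum_univ_succ, Fin.sum_univ_succ] at hℓ; omega
  rw [Fin.prod_univ_succ, Fin.prod_univ_succ]
  simp only [stripBox, Fin.cons_zero, Fin.cons_succ, Measure.restrict_univ]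
  have hrest_nonneg := Finset.prod_nonneg fun j (_ : j ∈ Finset.univ) =>
    hnonneg volume (ℓ (Fin.succ (Fin.succ j)))
  exact mul_le_mul (setIntegral_Icc_abs_pow_mul_gaussianPDFReal_le (hle 0) hη)
    (mul_le_mul (setIntegral_Ici_abs_pow_mul_gaussianPDFReal_le (hle _) ht) hrest hrest_nonneg
      (by positivity))
    (mul_nonneg (hnonneg _ _) hrest_nonneg) (by positivity)

theorem gaussian_strip_estimate (n : ℕ) (hn : 2 ≤ n) (η t : ℝ) (hη : 0 < η) (ht : 0 < t) :
    ∫ y in {y : EuclideanSpace ℝ (Fin n) |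
        |y ⟨0, by omega⟩| ≤ η ∧ t ≤ y ⟨1, by omega⟩},
      (∑ ℓ ∈ multiIdx3 n, ∏ i, |y i| ^ (ℓ i)) ∂(gauss n)
      ≤ 3000 * (n : ℝ) ^ 3 * η * (t ^ 2 + 2) * Real.exp (-t ^ 2 / 2) := by
  obtain ⟨m, rfl⟩ : ∃ m, n = m + 2 := ⟨n - 2, by omega⟩
  have hbox : {y : EuclideanSpace ℝ (Fin (m + 2)) | |y 0| ≤ η ∧ t ≤ y 1} =
      {y | ∀ i, y i ∈ stripBox η t m i} := by
    ext y; simp [Fin.forall_fin_succ, stripBox, abs_le]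
  have hcard := card_multiIdx3_le (n := m + 2) (by omega)
  calc ∫ y in {y : EuclideanSpace ℝ (Fin (m + 2)) | |y 0| ≤ η ∧ t ≤ y 1},
        ∑ ℓ ∈ multiIdx3 (m + 2), ∏ i, |y i| ^ ℓ i ∂gauss (m + 2)
      = ∑ ℓ ∈ multiIdx3 (m + 2),
          ∏ i, ∫ x in stripBox η t m i, |x| ^ ℓ i * gaussianPDFReal 0 1 x := by
        rw [hbox, integral_finsetSum _ fun ℓ _ => (integrable_gauss_prod fun i =>
          integrable_abs_pow_mul_gaussianPDFReal (ℓ i)).restrict]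
        exact Finset.sum_congr rfl fun ℓ _ =>
          setIntegral_gauss_pi_prod (measurableSet_stripBox η t m) fun i x => |x| ^ ℓ i
    _ ≤ ∑ _ℓ ∈ multiIdx3 (m + 2), 2 * η * ((t ^ 2 + 2) * exp (-t ^ 2 / 2) * 4 ^ 3) :=
        Finset.sum_le_sum fun ℓ hℓ =>
          prod_setIntegral_stripBox_le hη.le ht.le (Finset.mem_filter.1 hℓ).2
    _ ≤ 3000 * ((m + 2 : ℕ) : ℝ) ^ 3 * η * (t ^ 2 + 2) * exp (-t ^ 2 / 2) := by
        rw [Finset.sum_const, nsmul_eq_mul]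
        have : 0 ≤ η * (t ^ 2 + 2) * exp (-t ^ 2 / 2) := by positivity
        nlinarith
end

section
/- For every measurable set A ⊆ ℝⁿ, ‖∫_A x dγ_n(x)‖²_{ℓ²} ≤ 1/(2π), with equality if and only if, up to a γ_n-null set, A is a half-space whose boundary hyperplane contains the origin of ℝⁿ. -/
open MeasureTheory

/-!
For a vector `v`, the functional `x ↦ ⟪x, v⟫` is centred normal with variance `‖v‖²` under `γₙ`,
so for measurable `A` with `m = ∫_A x dγₙ`,
`⟪m, v⟫ = ∫_A ⟪x, v⟫ ≤ ∫_{⟪x, v⟫ ≥ 0} ⟪x, v⟫ = ‖v‖ / √(2π)`.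
Taking `v = m` gives `‖m‖ ≤ 1 / √(2π)`. In the equality case, `A` and the half-space
`{⟪x, m⟫ ≥ 0}` carry the same integral of `⟪x, m⟫`, which forces them to agree off the
hyperplane `⟪x, m⟫ = 0`, a null set. Conversely, if `A` is a.e. the half-space `{⟪x, v⟫ ≥ 0}`,
then `‖v‖ / √(2π) = ⟪m, v⟫ ≤ ‖m‖ ‖v‖`. Finally, `γₙ` is Mathlib's `stdGaussian`, as both have
characteristic function `exp (-‖t‖² / 2)`.
-/

open ProbabilityTheory Real Set Module
open scoped NNReal RealInnerProductSpace

lemma measure_symmDiff_eq_zero_of_setIntegral_eq_nonneg {X : Type*} [MeasurableSpace X]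
    {μ : Measure X} {f : X → ℝ} {A : Set X} (hA : MeasurableSet A) (hf : StronglyMeasurable f)
    (hfi : Integrable f μ) (hf0 : μ {x | f x = 0} = 0)
    (h : ∫ x in A, f x ∂μ = ∫ x in {x | 0 ≤ f x}, f x ∂μ) :
    μ (symmDiff A {x | 0 ≤ f x}) = 0 := by
  -- `1_H f - 1_A f` is nonnegative with integral zero, and vanishes on `A ∆ H` only where `f = 0`.
  set H := {x | 0 ≤ f x}
  have hH : MeasurableSet H := stronglyMeasurable_const.measurableSet_le hf
  have hgap_nonneg : 0 ≤ H.indicator f - A.indicator f := fun x => by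
    by_cases hxA : x ∈ A <;> by_cases hxH : x ∈ H <;>
      simp_all [H, indicator_of_mem, indicator_of_notMem, le_of_lt]
  have hgap_zero : H.indicator f - A.indicator f =ᵐ[μ] 0 := by
    refine (integral_eq_zero_iff_of_nonneg hgap_nonneg
      ((hfi.indicator hH).sub (hfi.indicator hA))).mp ?_
    rw [Pi.sub_def, integral_sub (hfi.indicator hH) (hfi.indicator hA), integral_indicator hH,
      integral_indicator hA, h, sub_self]
  have hf_ne : ∀ᵐ x ∂μ, f x ≠ 0 := measure_eq_zero_iff_ae_notMem.mp hf0
  refine measure_eq_zero_iff_ae_notMem.mpr ?_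
  filter_upwards [hgap_zero, hf_ne] with x hx hfx
  by_cases hxA : x ∈ A <;> by_cases hxH : x ∈ H <;>
    simp_all [H, indicator_of_mem, indicator_of_notMem, mem_symmDiff]

lemma integral_Ioi_mul_exp_neg_mul_sq {b : ℝ} (hb : 0 < b) :
    ∫ r in Ioi (0 : ℝ), r * rexp (-b * r ^ 2) = (2 * b)⁻¹ := by
  have h := integral_mul_cexp_neg_mul_sq (b := (b : ℂ)) (by simpa using hb)
  simp_rw [show ∀ r : ℝ, (r : ℂ) * Complex.exp (-b * r ^ 2) = ((r * rexp (-b * r ^ 2) : ℝ) : ℂ) by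
    intro r; push_cast; rfl, integral_complex_ofReal] at h
  exact_mod_cast h

lemma setIntegral_Ici_id_gaussianReal (v : ℝ≥0) :
    ∫ t in Ici (0 : ℝ), t ∂gaussianReal 0 v = √v / √(2 * π) := by
  rcases eq_or_ne v 0 with rfl | hv
  · simp [gaussianReal_zero_var, setIntegral_dirac]
  rw [gaussianReal_of_var_ne_zero _ hv, setIntegral_withDensity_eq_setIntegral_toReal_smul
    (measurable_gaussianPDF 0 v) (ae_of_all _ fun _ => gaussianPDF_lt_top) (fun t => t)
    measurableSet_Ici, integral_Ici_eq_integral_Ioi]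
  simp_rw [toReal_gaussianPDF, gaussianPDFReal_def, smul_eq_mul, sub_zero]
  calc ∫ t in Ioi 0, (√(2 * π * v))⁻¹ * rexp (-t ^ 2 / (2 * v)) * t
      = (√(2 * π * v))⁻¹ * ∫ t in Ioi 0, t * rexp (-(2 * (v : ℝ))⁻¹ * t ^ 2) := by
        rw [← integral_const_mul]
        refine setIntegral_congr_fun measurableSet_Ioi fun t _ => ?_
        ring_nf
    _ = √v / √(2 * π) := by
        rw [integral_Ioi_mul_exp_neg_mul_sq (by positivity), Real.sqrt_mul (by positivity)]
        field_simp
        exact (Real.sq_sqrt v.2).symm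

section StdGaussianDensity

variable {V : Type*} [NormedAddCommGroup V] [InnerProductSpace ℝ V]

noncomputable def stdGaussianPDF (y : V) : ℝ :=
  (2 * π) ^ (-(finrank ℝ V : ℝ) / 2) * rexp (-‖y‖ ^ 2 / 2)

lemma stdGaussianPDF_nonneg (y : V) : 0 ≤ stdGaussianPDF y := by
  unfold stdGaussianPDF; positivity

variable [FiniteDimensional ℝ V] [MeasurableSpace V] [BorelSpace V]

lemma integrable_stdGaussianPDF : Integrable (stdGaussianPDF (V := V)) := by
  refine (Integrable.of_integral_ne_zero ?_).const_mul _
  rw [show (fun y : V => rexp (-‖y‖ ^ 2 / 2)) = fun y => rexp (-(1 / 2) * ‖y‖ ^ 2) by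
    ext; ring_nf, GaussianFourier.integral_rexp_neg_mul_sq_norm (by norm_num)]
  positivity

lemma charFun_withDensity_stdGaussianPDF (t : V) :
    charFun (volume.withDensity fun y => ENNReal.ofReal (stdGaussianPDF y)) t
      = Complex.exp (-‖t‖ ^ 2 / 2) := by
  have h2π : (0 : ℝ) ≤ 2 * π := by positivity
  rw [charFun_apply, integral_withDensity_eq_integral_toReal_smul
    (by unfold stdGaussianPDF; fun_prop) (ae_of_all _ fun _ => ENNReal.ofReal_lt_top)]
  simp_rw [ENNReal.toReal_ofReal (stdGaussianPDF_nonneg _), stdGaussianPDF, Complex.real_smul]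
  have hintegrand : ∀ x : V,
      ((((2 * π) ^ (-(finrank ℝ V : ℝ) / 2) * rexp (-‖x‖ ^ 2 / 2) : ℝ) : ℂ)
        * Complex.exp (⟪x, t⟫ * Complex.I))
      = ((2 * π) ^ (-(finrank ℝ V : ℝ) / 2) : ℝ) *
        Complex.exp (-(1 / 2 : ℂ) * ‖x‖ ^ 2 + Complex.I * ⟪t, x⟫) := by
    intro x
    push_cast
    rw [mul_assoc, ← Complex.exp_add, real_inner_comm]
    ring_nf
  simp_rw [hintegrand]
  rw [integral_const_mul, GaussianFourier.integral_cexp_neg_mul_sq_norm_add (by norm_num),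
    Complex.ofReal_cpow h2π, ← mul_assoc,
    show (π : ℂ) / (1 / 2) = ((2 * π : ℝ) : ℂ) by push_cast; ring,
    ← Complex.cpow_add _ _ (by exact_mod_cast (by positivity : (2 * π : ℝ) ≠ 0))]
  push_cast
  rw [show -(finrank ℝ V : ℂ) / 2 + (finrank ℝ V : ℂ) / 2 = 0 by ring, Complex.cpow_zero, one_mul,
    Complex.I_sq]
  ring_nf

lemma withDensity_stdGaussianPDF :
    volume.withDensity (fun y => ENNReal.ofReal (stdGaussianPDF y)) = stdGaussian V := by
  have := isFiniteMeasure_withDensity_ofReal (integrable_stdGaussianPDF (V := V)).2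
  refine Measure.ext_of_charFun (funext fun t => ?_)
  rw [charFun_withDensity_stdGaussianPDF, charFun_stdGaussian]

end StdGaussianDensity

lemma gauss_eq_stdGaussian (n : ℕ) : gauss n = stdGaussian (EuclideanSpace ℝ (Fin n)) := by
  rw [← withDensity_stdGaussianPDF, gauss]
  simp [stdGaussianPDF]

section StdGaussianHalfspace

variable {E : Type*} [NormedAddCommGroup E] [InnerProductSpace ℝ E] [FiniteDimensional ℝ E]
  [MeasurableSpace E] [BorelSpace E]

lemma integrable_inner_stdGaussian (v : E) : Integrable (fun x => ⟪x, v⟫) (stdGaussian E) :=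
  IsGaussian.integrable_id.inner_const v

lemma map_inner_stdGaussian (v : E) :
    (stdGaussian E).map (fun x => ⟪x, v⟫) = gaussianReal 0 (‖v‖₊ ^ 2) := by
  have h : (fun x : E => ⟪x, v⟫) = innerSL ℝ v := funext fun x => real_inner_comm v x
  rw [h, IsGaussian.map_eq_gaussianReal, integral_strongDual_stdGaussian,
    variance_dual_stdGaussian, innerSL_apply_norm]
  congr
  ext
  simp

lemma stdGaussian_setOf_inner_eq_zero {v : E} (hv : v ≠ 0) :
    stdGaussian E {x | ⟪x, v⟫ = 0} = 0 := by
  have := nullSingletonClass_gaussianReal (μ := 0) (v := ‖v‖₊ ^ 2) (by simpa using hv)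
  rw [show {x : E | ⟪x, v⟫ = 0} = (fun x => ⟪x, v⟫) ⁻¹' {0} from rfl,
    ← Measure.map_apply (by fun_prop) (measurableSet_singleton 0), map_inner_stdGaussian]
  exact measure_singleton 0

lemma setIntegral_inner_halfspace_stdGaussian (v : E) :
    ∫ x in {x | 0 ≤ ⟪x, v⟫}, ⟪x, v⟫ ∂stdGaussian E = ‖v‖ / √(2 * π) := by
  rw [show {x : E | 0 ≤ ⟪x, v⟫} = (fun x => ⟪x, v⟫) ⁻¹' Ici 0 from rfl,
    ← setIntegral_map (g := fun x => ⟪x, v⟫) (f := fun t => t) measurableSet_Ici (by fun_prop)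
      (by fun_prop), map_inner_stdGaussian, setIntegral_Ici_id_gaussianReal]
  simp

lemma setIntegral_inner_le_stdGaussian {A : Set E} (hA : MeasurableSet A) (v : E) :
    ∫ x in A, ⟪x, v⟫ ∂stdGaussian E ≤ ‖v‖ / √(2 * π) :=
  (setIntegral_le_nonneg hA (by fun_prop) (integrable_inner_stdGaussian v)).trans_eq
    (setIntegral_inner_halfspace_stdGaussian v)

lemma inner_setIntegral_id_stdGaussian (A : Set E) (v : E) :
    ⟪∫ x in A, x ∂stdGaussian E, v⟫ = ∫ x in A, ⟪x, v⟫ ∂stdGaussian E := by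
  rw [real_inner_comm, ← integral_inner (f := fun x => x) IsGaussian.integrable_id.integrableOn]
  simp_rw [real_inner_comm]

theorem norm_setIntegral_id_stdGaussian_le {A : Set E} (hA : MeasurableSet A) :
    ‖∫ x in A, x ∂stdGaussian E‖ ≤ 1 / √(2 * π) := by
  set m := ∫ x in A, x ∂stdGaussian E
  rcases (norm_nonneg m).eq_or_lt with hm | hm
  · rw [← hm]; positivity
  refine le_of_mul_le_mul_left ?_ hm
  calc ‖m‖ * ‖m‖ = ⟪m, m⟫ := (real_inner_self_eq_norm_mul_norm m).symm
    _ = ∫ x in A, ⟪x, m⟫ ∂stdGaussian E := inner_setIntegral_id_stdGaussian A m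
    _ ≤ ‖m‖ / √(2 * π) := setIntegral_inner_le_stdGaussian hA m
    _ = ‖m‖ * (1 / √(2 * π)) := by ring

theorem norm_setIntegral_id_stdGaussian_eq_iff {A : Set E} (hA : MeasurableSet A) :
    ‖∫ x in A, x ∂stdGaussian E‖ = 1 / √(2 * π) ↔
      ∃ v : E, v ≠ 0 ∧ stdGaussian E (symmDiff A {x | 0 ≤ ⟪x, v⟫}) = 0 := by
  set m := ∫ x in A, x ∂stdGaussian E
  constructor
  · intro hm
    have hm0 : m ≠ 0 := by
      rw [← norm_pos_iff, hm]
      positivity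
    refine ⟨m, hm0, measure_symmDiff_eq_zero_of_setIntegral_eq_nonneg hA (by fun_prop)
      (integrable_inner_stdGaussian m) (stdGaussian_setOf_inner_eq_zero hm0) ?_⟩
    rw [setIntegral_inner_halfspace_stdGaussian, ← inner_setIntegral_id_stdGaussian,
      real_inner_self_eq_norm_sq, hm]
    ring
  · rintro ⟨v, hv, hA_ae⟩
    have hmv : ⟪m, v⟫ = ‖v‖ / √(2 * π) := by
      rw [inner_setIntegral_id_stdGaussian,
        setIntegral_congr_set (measure_symmDiff_eq_zero_iff.mp hA_ae),
        setIntegral_inner_halfspace_stdGaussian]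
    refine le_antisymm (norm_setIntegral_id_stdGaussian_le hA) ?_
    have hvpos : 0 < ‖v‖ := norm_pos_iff.mpr hv
    refine le_of_mul_le_mul_right ?_ hvpos
    calc 1 / √(2 * π) * ‖v‖ = ⟪m, v⟫ := by rw [hmv]; ring
      _ ≤ ‖m‖ * ‖v‖ := real_inner_le_norm m v

end StdGaussianHalfspace

theorem gaussian_first_moment_halfspace (n : ℕ) (A : Set (EuclideanSpace ℝ (Fin n)))
    (hA : MeasurableSet A) :
    ‖∫ x in A, x ∂(gauss n)‖ ^ 2 ≤ 1 / (2 * Real.pi) ∧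
    (‖∫ x in A, x ∂(gauss n)‖ ^ 2 = 1 / (2 * Real.pi) ↔
      ∃ v : EuclideanSpace ℝ (Fin n), v ≠ 0 ∧
        gauss n (symmDiff A {x | 0 ≤ (inner ℝ x v : ℝ)}) = 0) := by
  rw [gauss_eq_stdGaussian]
  have hsq : (1 / √(2 * π)) ^ 2 = 1 / (2 * π) := by
    rw [div_pow, one_pow, sq_sqrt (by positivity)]
  refine ⟨?_, ?_⟩
  · rw [← hsq]
    exact pow_le_pow_left₀ (norm_nonneg _) (norm_setIntegral_id_stdGaussian_le hA) 2
  · rw [← hsq, sq_eq_sq₀ (norm_nonneg _) (by positivity)]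
    exact norm_setIntegral_id_stdGaussian_eq_iff hA
end

section
/- Let n ≥ 1 and k ≥ 1, and let A_1, …, A_k ⊆ ℝⁿ be measurable sets. Then the function ρ ↦ Σ_{i=1}^k ∫_{ℝⁿ} 1_{A_i} T_ρ 1_{A_i} dγ_n is differentiable at ρ = 0, and its derivative at ρ = 0 equals Σ_{i=1}^k ‖∫_{A_i} x dγ_n(x)‖²_{ℓ²}. -/
/-!
Write `T_ρ g (x) = 𝔼 g (ρ x + √(1 - ρ²) Y)` and change variables `z = ρ x + √(1 - ρ²) y`: then
`∫ f · T_ρ g dγₙ = ∫∫ f(x) g(z) K_ρ(x, z) dx dz` with Mehler's kernel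
`K_ρ(x, z) = (2π)^(-n) (1 - ρ²)^(-n/2) exp (-(‖x‖² + ‖z‖² - 2ρ⟪x, z⟫) / (2(1 - ρ²)))`,
the joint density of `(X, ρ X + √(1 - ρ²) Y)`. For `|ρ| ≤ 1/2` the `ρ`-derivative of `K_ρ` is
dominated by a multiple of `exp (-(‖x‖² + ‖z‖²) / 8)`, so we may differentiate under the integral
sign. At `ρ = 0` this derivative is `⟪x, z⟫ φ(x) φ(z)` with `φ` the Gaussian density, so the
derivative of `∫ f · T_ρ g dγₙ` factors as `⟪∫ f(x) x dγₙ, ∫ g(x) x dγₙ⟫`.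
-/

open MeasureTheory

open Real Topology Filter
open scoped RealInnerProductSpace

lemma integral_comp_add_smul {V F : Type*} [NormedAddCommGroup V] [NormedSpace ℝ V]
    [MeasurableSpace V] [BorelSpace V] [FiniteDimensional ℝ V] (μ : Measure V)
    [μ.IsAddHaarMeasure] [NormedAddCommGroup F] [NormedSpace ℝ F] (f : V → F) (c : V) (s : ℝ) :
    ∫ y, f (c + s • y) ∂μ = |(s ^ Module.finrank ℝ V)⁻¹| • ∫ z, f z ∂μ := by
  rw [Measure.integral_comp_smul μ (fun y => f (c + y)) s, integral_add_left_eq_self]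

lemma integral_inner_prod {α β E : Type*} [MeasurableSpace α] [MeasurableSpace β]
    {μ : Measure α} {ν : Measure β} [SigmaFinite μ] [SigmaFinite ν] [NormedAddCommGroup E]
    [InnerProductSpace ℝ E] [CompleteSpace E] {u : α → E} {v : β → E}
    (hu : Integrable u μ) (hv : Integrable v ν) :
    ∫ p, ⟪u p.1, v p.2⟫ ∂μ.prod ν = ⟪∫ x, u x ∂μ, ∫ y, v y ∂ν⟫ := by
  have hint : Integrable (fun p : α × β => ⟪u p.1, v p.2⟫) (μ.prod ν) :=
    (hu.norm.mul_prod hv.norm).mono' (hu.1.comp_fst.inner hv.1.comp_snd)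
      (Eventually.of_forall fun p => norm_inner_le_norm _ _)
  rw [integral_prod _ hint]
  dsimp only
  simp_rw [integral_inner hv, real_inner_comm (∫ y, v y ∂ν), integral_inner hu]

/-- The determinant factor `(1 - ρ²)^(-d/2)` of Mehler's kernel is kept inside the exponential,
so that the `ρ`-derivative of the kernel is the kernel times `mehlerExponentDeriv`. -/
noncomputable def mehlerExponent (d : ℕ) (ρ a b : ℝ) : ℝ :=
  -(d / 2 : ℝ) * log (1 - ρ ^ 2) - (a - 2 * ρ * b) / (2 * (1 - ρ ^ 2))

noncomputable def mehlerExponentDeriv (d : ℕ) (ρ a b : ℝ) : ℝ :=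
  d * ρ / (1 - ρ ^ 2) + (b * (1 + ρ ^ 2) - a * ρ) / (1 - ρ ^ 2) ^ 2

section MehlerExponent

variable {d : ℕ} {ρ a b : ℝ}

lemma hasDerivAt_mehlerExponent (hρ : ρ ^ 2 < 1) :
    HasDerivAt (fun r => mehlerExponent d r a b) (mehlerExponentDeriv d ρ a b) ρ := by
  have ht : 1 - ρ ^ 2 ≠ 0 := by linarith
  have hsq : HasDerivAt (fun r : ℝ => 1 - r ^ 2) (-(2 * ρ)) ρ := by
    simpa using (hasDerivAt_pow 2 ρ).const_sub 1
  have hlin : HasDerivAt (fun r : ℝ => a - 2 * r * b) (-(2 * b)) ρ := by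
    simpa using (((hasDerivAt_id ρ).const_mul 2).mul_const b).const_sub a
  refine (((hsq.log ht).const_mul (-(d / 2 : ℝ))).sub
    (hlin.div (hsq.const_mul 2) (by simpa))).congr_deriv ?_
  unfold mehlerExponentDeriv
  field_simp
  ring

lemma mehlerExponent_le (hρ : ρ ^ 2 < 1) (hb : |b| ≤ a / 2) :
    mehlerExponent d ρ a b ≤ -(d / 2 : ℝ) * log (1 - ρ ^ 2) - a / 4 := by
  have ht : 0 < 1 - ρ ^ 2 := by linarith
  have hρb : |2 * ρ * b| ≤ a / 2 * (1 + ρ ^ 2) := by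
    rw [abs_mul, abs_mul, abs_two]
    nlinarith [abs_nonneg ρ, abs_nonneg b, sq_abs ρ, sq_nonneg (|ρ| - 1)]
  have : a / 4 ≤ (a - 2 * ρ * b) / (2 * (1 - ρ ^ 2)) := by
    rw [le_div_iff₀ (by positivity)]
    linarith [le_abs_self (2 * ρ * b)]
  unfold mehlerExponent
  linarith

lemma neg_log_one_sub_sq_le (hρ : |ρ| ≤ 1 / 2) : -log (1 - ρ ^ 2) ≤ 1 := by
  have hρ2 : ρ ^ 2 ≤ 1 / 4 := by nlinarith [sq_abs ρ, abs_nonneg ρ]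
  have := one_sub_inv_le_log_of_pos (x := 1 - ρ ^ 2) (by linarith)
  have : (1 - ρ ^ 2)⁻¹ ≤ 4 / 3 := by
    rw [inv_le_comm₀ (by linarith) (by norm_num)]; linarith
  linarith

lemma abs_mehlerExponentDeriv_le (hρ : |ρ| ≤ 1 / 2) (hb : |b| ≤ a / 2) :
    |mehlerExponentDeriv d ρ a b| ≤ (d : ℝ) + 2 * a := by
  have ha : 0 ≤ a := by linarith [abs_nonneg b]
  have hρ2 : ρ ^ 2 ≤ 1 / 4 := by nlinarith [sq_abs ρ, abs_nonneg ρ]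
  have ht : 3 / 4 ≤ 1 - ρ ^ 2 := by linarith
  have h1 : |d * ρ / (1 - ρ ^ 2)| ≤ (d : ℝ) := by
    rw [abs_div, abs_mul, Nat.abs_cast, abs_of_pos (by linarith : 0 < 1 - ρ ^ 2),
      div_le_iff₀ (by linarith)]
    nlinarith [Nat.cast_nonneg (α := ℝ) d]
  have h2 : |(b * (1 + ρ ^ 2) - a * ρ) / (1 - ρ ^ 2) ^ 2| ≤ 2 * a := by
    rw [abs_div, abs_of_pos (by positivity : 0 < (1 - ρ ^ 2) ^ 2), div_le_iff₀ (by positivity)]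
    have : |b * (1 + ρ ^ 2) - a * ρ| ≤ a / 2 * (1 + ρ ^ 2) + a * |ρ| := by
      refine (abs_sub _ _).trans (add_le_add ?_ ?_)
      · rw [abs_mul, abs_of_pos (by positivity : 0 < 1 + ρ ^ 2)]; gcongr
      · rw [abs_mul, abs_of_nonneg ha]
    have : 9 / 16 ≤ (1 - ρ ^ 2) ^ 2 := by nlinarith
    nlinarith [mul_le_mul_of_nonneg_left hρ ha, mul_le_mul_of_nonneg_left hρ2 ha]
  exact (abs_add_le _ _).trans (add_le_add h1 h2)

end MehlerExponent

section MehlerKernel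

variable {V : Type*} [NormedAddCommGroup V] [InnerProductSpace ℝ V] (d : ℕ) {ρ : ℝ}

lemma abs_inner_le_half_add_sq (x y : V) : |⟪x, y⟫| ≤ (‖x‖ ^ 2 + ‖y‖ ^ 2) / 2 := by
  have := two_mul_le_add_sq ‖x‖ ‖y‖
  linarith [abs_real_inner_le_norm x y]

noncomputable def mehlerKernel (ρ : ℝ) (p : V × V) : ℝ :=
  (2 * π) ^ (-(d : ℝ)) * exp (mehlerExponent d ρ (‖p.1‖ ^ 2 + ‖p.2‖ ^ 2) ⟪p.1, p.2⟫)

noncomputable def mehlerKernelDeriv (ρ : ℝ) (p : V × V) : ℝ :=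
  mehlerKernel d ρ p * mehlerExponentDeriv d ρ (‖p.1‖ ^ 2 + ‖p.2‖ ^ 2) ⟪p.1, p.2⟫

lemma hasDerivAt_mehlerKernel (hρ : ρ ^ 2 < 1) (p : V × V) :
    HasDerivAt (mehlerKernel d · p) (mehlerKernelDeriv d ρ p) ρ :=
  ((hasDerivAt_mehlerExponent hρ).exp.const_mul _).congr_deriv (by
    unfold mehlerKernelDeriv mehlerKernel; ring)

lemma mehlerKernelDeriv_zero (p : V × V) :
    mehlerKernelDeriv d 0 p = mehlerKernel d 0 p * ⟪p.1, p.2⟫ := by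
  simp [mehlerKernelDeriv, mehlerExponentDeriv]

variable {d}

lemma continuous_mehlerKernel (ρ : ℝ) : Continuous (mehlerKernel d ρ : V × V → ℝ) := by
  unfold mehlerKernel mehlerExponent; fun_prop

lemma continuous_mehlerKernelDeriv (ρ : ℝ) : Continuous (mehlerKernelDeriv d ρ : V × V → ℝ) := by
  unfold mehlerKernelDeriv mehlerExponentDeriv
  exact (continuous_mehlerKernel ρ).mul (by fun_prop)

lemma mehlerKernel_le (hρ : ρ ^ 2 < 1) (p : V × V) :
    mehlerKernel d ρ p ≤
      (2 * π) ^ (-(d : ℝ)) * exp (-(d / 2 : ℝ) * log (1 - ρ ^ 2)) *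
        exp (-(‖p.1‖ ^ 2 + ‖p.2‖ ^ 2) / 4) := by
  rw [mul_assoc, ← exp_add, mehlerKernel]
  gcongr
  exact (mehlerExponent_le hρ (abs_inner_le_half_add_sq p.1 p.2)).trans_eq (by ring)

lemma abs_mehlerKernelDeriv_le (hρ : |ρ| ≤ 1 / 2) (p : V × V) :
    |mehlerKernelDeriv d ρ p| ≤
      (2 * π) ^ (-(d : ℝ)) * exp (d / 2) * (d + 16) * exp (-(‖p.1‖ ^ 2 + ‖p.2‖ ^ 2) / 8) := by
  set a := ‖p.1‖ ^ 2 + ‖p.2‖ ^ 2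
  have hρ2 : ρ ^ 2 < 1 := by nlinarith [sq_abs ρ, abs_nonneg ρ]
  have hK : mehlerKernel d ρ p ≤ (2 * π) ^ (-(d : ℝ)) * exp (d / 2) * exp (-a / 4) := by
    refine (mehlerKernel_le hρ2 p).trans ?_
    gcongr
    nlinarith [neg_log_one_sub_sq_le hρ, Nat.cast_nonneg (α := ℝ) d]
  -- `a ≤ 8 exp (a / 8)` trades the polynomial factor for half of the Gaussian decay
  have hL : |mehlerExponentDeriv d ρ a ⟪p.1, p.2⟫| ≤ (d + 16) * exp (a / 8) := by
    refine (abs_mehlerExponentDeriv_le hρ (abs_inner_le_half_add_sq p.1 p.2)).trans ?_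
    have := add_one_le_exp (a / 8)
    have : 1 ≤ exp (a / 8) := one_le_exp (by positivity)
    nlinarith [Nat.cast_nonneg (α := ℝ) d]
  have hsplit : exp (-a / 4) * exp (a / 8) = exp (-a / 8) := by rw [← exp_add]; ring_nf
  rw [mehlerKernelDeriv, abs_mul, abs_of_pos (by unfold mehlerKernel; positivity)]
  calc _ ≤ (2 * π) ^ (-(d : ℝ)) * exp (d / 2) * exp (-a / 4) * ((d + 16) * exp (a / 8)) :=
        mul_le_mul hK hL (abs_nonneg _) (by positivity)
    _ = _ := by rw [← hsplit]; ring

variable [FiniteDimensional ℝ V] [MeasurableSpace V] [BorelSpace V]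

lemma integrable_exp_neg_mul_norm_sq {c : ℝ} (hc : 0 < c) :
    Integrable (fun x : V => exp (-c * ‖x‖ ^ 2)) := by
  have := (GaussianFourier.integrable_cexp_neg_mul_sq_norm_add (V := V)
    (b := (c : ℂ)) (by simpa using hc) 0 0).norm
  simpa [Complex.norm_exp, ← Complex.ofReal_pow] using this

lemma integrable_exp_neg_add_norm_sq_div {c : ℝ} (hc : 0 < c) :
    Integrable (fun p : V × V => exp (-(‖p.1‖ ^ 2 + ‖p.2‖ ^ 2) / c)) := by
  have hc' : 0 < c⁻¹ := inv_pos.2 hc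
  refine ((integrable_exp_neg_mul_norm_sq hc').mul_prod
    (integrable_exp_neg_mul_norm_sq hc')).congr (Eventually.of_forall fun p => ?_)
  simp only [← exp_add]
  congr 1
  ring

lemma integrable_mehlerKernel (hρ : ρ ^ 2 < 1) : Integrable (mehlerKernel d ρ : V × V → ℝ) := by
  refine ((integrable_exp_neg_add_norm_sq_div four_pos).const_mul
    ((2 * π) ^ (-(d : ℝ)) * exp (-(d / 2 : ℝ) * log (1 - ρ ^ 2)))).mono'
    (continuous_mehlerKernel ρ).aestronglyMeasurable (Eventually.of_forall fun p => ?_)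
  rw [norm_of_nonneg (by unfold mehlerKernel; positivity)]
  exact mehlerKernel_le hρ p

theorem hasDerivAt_integral_mul_mehlerKernel {h : V × V → ℝ} (hh : AEStronglyMeasurable h)
    {C : ℝ} (hC : ∀ p, ‖h p‖ ≤ C) :
    HasDerivAt (fun ρ => ∫ p, h p * mehlerKernel d ρ p)
      (∫ p, h p * mehlerKernelDeriv d 0 p) 0 := by
  have hball : ∀ ρ ∈ Metric.ball (0 : ℝ) (1 / 2), |ρ| ≤ 1 / 2 := fun ρ hρ => by
    rw [Metric.mem_ball, dist_zero_right, norm_eq_abs] at hρ; exact hρ.le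
  refine (hasDerivAt_integral_of_dominated_loc_of_deriv_le
    (F := fun ρ p => h p * mehlerKernel d ρ p) (F' := fun ρ p => h p * mehlerKernelDeriv d ρ p)
    (Metric.ball_mem_nhds 0 one_half_pos)
    (Eventually.of_forall fun ρ => hh.mul (continuous_mehlerKernel ρ).aestronglyMeasurable)
    ((integrable_mehlerKernel (by norm_num)).bdd_mul hh (Eventually.of_forall hC))
    (hh.mul (continuous_mehlerKernelDeriv 0).aestronglyMeasurable)
    (Eventually.of_forall fun p ρ hρ => ?_)
    (((integrable_exp_neg_add_norm_sq_div (by norm_num : (0 : ℝ) < 8)).const_mul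
      ((2 * π) ^ (-(d : ℝ)) * exp (d / 2) * (d + 16))).const_mul C)
    (Eventually.of_forall fun p ρ hρ => ?_)).2
  · rw [norm_mul, norm_eq_abs]
    exact mul_le_mul (hC p) (abs_mehlerKernelDeriv_le (hball ρ hρ) p) (abs_nonneg _)
      ((norm_nonneg _).trans (hC p))
  · have hρ' := hball ρ hρ
    exact (hasDerivAt_mehlerKernel d (by nlinarith [sq_abs ρ, abs_nonneg ρ]) p).const_mul (h p)

end MehlerKernel

section GaussianMeasure

variable {n : ℕ}

noncomputable def gaussDensity (n : ℕ) (x : EuclideanSpace ℝ (Fin n)) : ℝ :=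
  (2 * π) ^ (-(n : ℝ) / 2) * exp (-‖x‖ ^ 2 / 2)

lemma gaussDensity_pos (x : EuclideanSpace ℝ (Fin n)) : 0 < gaussDensity n x := by
  unfold gaussDensity; positivity

lemma continuous_gaussDensity : Continuous (gaussDensity n) := by
  unfold gaussDensity; fun_prop

lemma integral_gauss {F : Type*} [NormedAddCommGroup F] [NormedSpace ℝ F]
    (f : EuclideanSpace ℝ (Fin n) → F) :
    ∫ x, f x ∂gauss n = ∫ x, gaussDensity n x • f x := by
  change ∫ x, f x ∂volume.withDensity (fun y => ENNReal.ofReal (gaussDensity n y)) = _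
  rw [integral_withDensity_eq_integral_toReal_smul continuous_gaussDensity.measurable.ennreal_ofReal
    (Eventually.of_forall fun _ => ENNReal.ofReal_lt_top)]
  simp_rw [ENNReal.toReal_ofReal (gaussDensity_pos _).le]

lemma integrable_gaussDensity_mul_smul {f : EuclideanSpace ℝ (Fin n) → ℝ} (hf : Measurable f)
    {C : ℝ} (hfC : ∀ x, ‖f x‖ ≤ C) :
    Integrable (fun x => (gaussDensity n x * f x) • x) := by
  refine ((integrable_exp_neg_mul_norm_sq (by norm_num : (0 : ℝ) < 1 / 4)).const_mul
    ((2 * π) ^ (-(n : ℝ) / 2) * C)).mono'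
    (((continuous_gaussDensity.measurable.mul hf).smul measurable_id).aestronglyMeasurable)
    (Eventually.of_forall fun x => ?_)
  -- `t ≤ exp (t² / 4)` trades the first moment for half of the Gaussian decay
  have hx : ‖x‖ * exp (-‖x‖ ^ 2 / 2) ≤ exp (-(1 / 4) * ‖x‖ ^ 2) := by
    have := add_one_le_exp (‖x‖ ^ 2 / 4)
    calc _ ≤ exp (‖x‖ ^ 2 / 4) * exp (-‖x‖ ^ 2 / 2) := by
          gcongr; nlinarith [sq_nonneg (‖x‖ - 2)]
      _ = _ := by rw [← exp_add]; ring_nf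
  rw [norm_smul, norm_mul, norm_of_nonneg (gaussDensity_pos x).le, gaussDensity]
  calc _ ≤ (2 * π) ^ (-(n : ℝ) / 2) * exp (-‖x‖ ^ 2 / 2) * C * ‖x‖ := by
        gcongr; exact hfC x
    _ = (2 * π) ^ (-(n : ℝ) / 2) * C * (‖x‖ * exp (-‖x‖ ^ 2 / 2)) := by ring
    _ ≤ _ := by
        have : 0 ≤ C := (norm_nonneg _).trans (hfC 0)
        gcongr

variable {ρ : ℝ}

lemma OU_eq_integral_gaussDensity (hρ : ρ ^ 2 < 1) (g : EuclideanSpace ℝ (Fin n) → ℝ)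
    (x : EuclideanSpace ℝ (Fin n)) :
    OU n ρ g x = (√(1 - ρ ^ 2) ^ n)⁻¹ *
      ∫ z, gaussDensity n ((√(1 - ρ ^ 2))⁻¹ • (z - ρ • x)) * g z := by
  have hs : 0 < √(1 - ρ ^ 2) := sqrt_pos.2 (by linarith)
  have := integral_comp_add_smul volume
    (fun z => gaussDensity n ((√(1 - ρ ^ 2))⁻¹ • (z - ρ • x)) * g z) (ρ • x) √(1 - ρ ^ 2)
  rw [finrank_euclideanSpace_fin, abs_of_pos (by positivity), smul_eq_mul] at this
  rw [← this, OU, integral_gauss]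
  congr 1 with y
  simp [smul_smul, inv_mul_cancel₀ hs.ne']

lemma gaussDensity_mul_gaussDensity_eq_mehlerKernel (hρ : ρ ^ 2 < 1)
    (x z : EuclideanSpace ℝ (Fin n)) :
    gaussDensity n x * ((√(1 - ρ ^ 2) ^ n)⁻¹ * gaussDensity n ((√(1 - ρ ^ 2))⁻¹ • (z - ρ • x))) =
      mehlerKernel n ρ (x, z) := by
  have ht : 0 < 1 - ρ ^ 2 := by linarith
  have hs : 0 < √(1 - ρ ^ 2) := sqrt_pos.2 ht
  have hpow : (2 * π) ^ (-(n : ℝ) / 2) * (2 * π) ^ (-(n : ℝ) / 2) = (2 * π) ^ (-(n : ℝ)) := by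
    rw [← rpow_add (by positivity)]; ring_nf
  have hdet : (√(1 - ρ ^ 2) ^ n)⁻¹ = exp (-(n / 2 : ℝ) * log (1 - ρ ^ 2)) := by
    rw [← exp_log (pow_pos hs n), ← exp_neg, log_pow, log_sqrt ht.le]; ring_nf
  have hnorm : ‖(√(1 - ρ ^ 2))⁻¹ • (z - ρ • x)‖ ^ 2 =
      (‖z‖ ^ 2 - 2 * ρ * ⟪x, z⟫ + ρ ^ 2 * ‖x‖ ^ 2) / (1 - ρ ^ 2) := by
    rw [norm_smul, mul_pow, norm_inv, norm_of_nonneg hs.le, inv_pow, sq_sqrt ht.le,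
      norm_sub_sq_real, real_inner_smul_right, real_inner_comm, norm_smul, mul_pow,
      norm_eq_abs, sq_abs]
    ring
  simp only [gaussDensity, mehlerKernel, mehlerExponent, hdet, hnorm, ← hpow]
  calc _ = (2 * π) ^ (-(n : ℝ) / 2) * (2 * π) ^ (-(n : ℝ) / 2) * exp (-‖x‖ ^ 2 / 2 +
        (-(n / 2 : ℝ) * log (1 - ρ ^ 2) +
          -((‖z‖ ^ 2 - 2 * ρ * ⟪x, z⟫ + ρ ^ 2 * ‖x‖ ^ 2) / (1 - ρ ^ 2)) / 2)) := by
        rw [exp_add, exp_add]; ring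
    _ = _ := by congr 2; field_simp; ring

lemma gaussDensity_mul_gaussDensity (x z : EuclideanSpace ℝ (Fin n)) :
    gaussDensity n x * gaussDensity n z = mehlerKernel n 0 (x, z) := by
  simpa using gaussDensity_mul_gaussDensity_eq_mehlerKernel (n := n) (ρ := 0) (by norm_num) x z

theorem integral_mul_OU_eq_integral_mehlerKernel {f g : EuclideanSpace ℝ (Fin n) → ℝ}
    (hf : Measurable f) (hg : Measurable g) {C D : ℝ} (hfC : ∀ x, ‖f x‖ ≤ C)
    (hgD : ∀ x, ‖g x‖ ≤ D) (hρ : ρ ^ 2 < 1) :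
    ∫ x, f x * OU n ρ g x ∂gauss n =
      ∫ p : EuclideanSpace ℝ (Fin n) × EuclideanSpace ℝ (Fin n),
        f p.1 * g p.2 * mehlerKernel n ρ p := by
  have hint : Integrable (fun p : EuclideanSpace ℝ (Fin n) × EuclideanSpace ℝ (Fin n) =>
      f p.1 * g p.2 * mehlerKernel n ρ p) :=
    (integrable_mehlerKernel hρ).bdd_mul
      ((hf.comp measurable_fst).mul (hg.comp measurable_snd)).aestronglyMeasurable
      (Eventually.of_forall fun p => norm_mul_le_of_le (hfC p.1) (hgD p.2))
  rw [integral_gauss, Measure.volume_eq_prod, integral_prod _ hint]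
  refine integral_congr_ae (Eventually.of_forall fun x => ?_)
  dsimp only
  simp only [OU_eq_integral_gaussDensity hρ, smul_eq_mul, ← integral_const_mul]
  refine integral_congr_ae (Eventually.of_forall fun z => ?_)
  dsimp only
  rw [← gaussDensity_mul_gaussDensity_eq_mehlerKernel hρ]
  ring

end GaussianMeasure

theorem hasDerivAt_integral_mul_OU_at_zero {n : ℕ} {f g : EuclideanSpace ℝ (Fin n) → ℝ}
    (hf : Measurable f) (hg : Measurable g) {C D : ℝ} (hfC : ∀ x, ‖f x‖ ≤ C)
    (hgD : ∀ x, ‖g x‖ ≤ D) :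
    HasDerivAt (fun ρ => ∫ x, f x * OU n ρ g x ∂gauss n)
      ⟪∫ x, f x • x ∂gauss n, ∫ x, g x • x ∂gauss n⟫ 0 := by
  have hmehler : (fun ρ => ∫ p : EuclideanSpace ℝ (Fin n) × EuclideanSpace ℝ (Fin n),
      f p.1 * g p.2 * mehlerKernel n ρ p) =ᶠ[𝓝 0] fun ρ => ∫ x, f x * OU n ρ g x ∂gauss n := by
    filter_upwards [Ioo_mem_nhds (neg_lt_zero.2 one_pos) one_pos] with ρ hρ
    exact (integral_mul_OU_eq_integral_mehlerKernel hf hg hfC hgD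
      (by nlinarith [hρ.1, hρ.2])).symm
  have hderiv : ∫ p : EuclideanSpace ℝ (Fin n) × EuclideanSpace ℝ (Fin n),
      f p.1 * g p.2 * mehlerKernelDeriv n 0 p =
        ⟪∫ x, f x • x ∂gauss n, ∫ x, g x • x ∂gauss n⟫ := by
    simp_rw [integral_gauss, smul_smul]
    rw [← integral_inner_prod (integrable_gaussDensity_mul_smul hf hfC)
      (integrable_gaussDensity_mul_smul hg hgD), ← Measure.volume_eq_prod]
    refine integral_congr_ae (Eventually.of_forall fun ⟨x, z⟩ => ?_)
    simp only [mehlerKernelDeriv_zero, ← gaussDensity_mul_gaussDensity, real_inner_smul_left,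
      real_inner_smul_right]
    ring
  exact hderiv ▸ (hasDerivAt_integral_mul_mehlerKernel
    ((hf.comp measurable_fst).mul (hg.comp measurable_snd)).aestronglyMeasurable
    (fun p => norm_mul_le_of_le (hfC p.1) (hgD p.2))).congr_of_eventuallyEq hmehler.symm

theorem hasDerivAt_integral_indicator_mul_OU_at_zero {n : ℕ}
    {A : Set (EuclideanSpace ℝ (Fin n))} (hA : MeasurableSet A) :
    HasDerivAt (fun ρ => ∫ x, A.indicator 1 x * OU n ρ (A.indicator 1) x ∂gauss n)
      (‖∫ x in A, x ∂gauss n‖ ^ 2) 0 := by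
  set χ : EuclideanSpace ℝ (Fin n) → ℝ := A.indicator 1
  have hχ : Measurable χ := measurable_const.indicator hA
  have hχ_le (x : EuclideanSpace ℝ (Fin n)) : ‖χ x‖ ≤ 1 :=
    (norm_indicator_le_norm_self _ _).trans_eq norm_one
  have hmean : ∫ x in A, x ∂gauss n = ∫ x, χ x • x ∂gauss n := by
    simp_rw [χ, ← Set.indicator_smul_const_apply, Pi.one_apply, one_smul]
    exact (integral_indicator hA).symm
  rw [hmean, ← real_inner_self_eq_norm_sq]
  exact hasDerivAt_integral_mul_OU_at_zero hχ hχ hχ_le hχ_le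

theorem hasDerivAt_noise_stability_at_zero_general (n k : ℕ)
    (A : Fin k → Set (EuclideanSpace ℝ (Fin n))) (hA : ∀ i, MeasurableSet (A i)) :
    HasDerivAt
      (fun ρ => ∑ i, ∫ x, (A i).indicator 1 x * OU n ρ ((A i).indicator 1) x ∂(gauss n))
      (∑ i, ‖∫ x in A i, x ∂(gauss n)‖ ^ 2) 0 :=
  HasDerivAt.fun_sum fun i _ => hasDerivAt_integral_indicator_mul_OU_at_zero (hA i)

theorem hasDerivAt_noise_stability_at_zero (n k : ℕ) (hn : 1 ≤ n) (hk : 1 ≤ k)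
    (A : Fin k → Set (EuclideanSpace ℝ (Fin n))) (hA : ∀ i, MeasurableSet (A i)) :
    HasDerivAt
      (fun ρ => ∑ i, ∫ x, (A i).indicator 1 x * OU n ρ ((A i).indicator 1) x ∂(gauss n))
      (∑ i, ‖∫ x in A i, x ∂(gauss n)‖ ^ 2) 0 :=
  hasDerivAt_noise_stability_at_zero_general n k A hA
end
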